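/- For every x ∈ U^m and every vector v = (v₁,…,v_n) with 0 ≤ v_i ≤ 1 and ∑_{i=1}^n v_i = 1, one has ∑_{i=1}^n v_i·k_i(x) ≤ ‖v‖ · √(∑_{i=1}^n k_i(x)(k_i(x) − 1)) + 1, where ‖v‖ = √(∑_{i=1}^n v_i²). -/
import Mathlib

/-- Number of keys of the sequence `x` (counted with multiplicity) hashed into slot `i`. -/
def kcount {U : Type*} [Fintype U] {n m : ℕ} (h : U → Fin n) (x : Fin m → U) (i : Fin n) : ℕ :=
  (Finset.univ.filter (fun j => h (x j) = i)).card

/-- For every key sequence `x ∈ U^m` and every access pattern `v`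
(with `0 ≤ v i ≤ 1` and `∑ i, v i = 1`), one has
`∑ i, v i · k_i(x) ≤ ‖v‖ · √(∑ i, k_i(x)(k_i(x) − 1)) + 1`,
where `‖v‖ = √(∑ i, v i ²)`. -/
theorem weighted_count_le
    {U : Type*} [Fintype U] [Nonempty U]
    (n m : ℕ) (hn : 1 ≤ n)
    (h : U → Fin n) (x : Fin m → U)
    (v : Fin n → ℝ) (hv0 : ∀ i, 0 ≤ v i) (hv1 : ∀ i, v i ≤ 1)
    (hvsum : ∑ i, v i = 1) :
    ∑ i : Fin n, v i * (kcount h x i : ℝ)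
      ≤ Real.sqrt (∑ i : Fin n, v i ^ 2)
          * Real.sqrt (∑ i : Fin n, (kcount h x i : ℝ) * ((kcount h x i : ℝ) - 1))
          + 1 := by
  set k : Fin n → ℝ := fun i => (kcount h x i : ℝ) with hk
  set S : Finset (Fin n) := Finset.univ.filter (fun i => 1 ≤ kcount h x i) with hS
  have hstep1 : ∑ i : Fin n, v i * k i = (∑ i : Fin n, v i * (k i - 1)) + 1 := by
    have : ∑ i : Fin n, v i * k i = ∑ i : Fin n, (v i * (k i - 1) + v i) := by
      apply Finset.sum_congr rfl; intro i _; ring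
    rw [this, Finset.sum_add_distrib, hvsum]
  have hstep2 : ∑ i : Fin n, v i * (k i - 1) ≤ ∑ i ∈ S, v i * (k i - 1) := by
    have hsplit := Finset.sum_filter_add_sum_filter_not Finset.univ
      (fun i => 1 ≤ kcount h x i) (fun i => v i * (k i - 1))
    rw [← hsplit]
    have hneg : ∑ i ∈ Finset.univ.filter (fun i => ¬ 1 ≤ kcount h x i),
        v i * (k i - 1) ≤ 0 := by
      apply Finset.sum_nonpos
      intro i hi
      simp only [Finset.mem_filter, not_le, Nat.lt_one_iff] at hi
      have : k i = 0 := by simp [hk, hi.2]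
      rw [this]
      have := hv0 i; nlinarith
    simp only [hS]
    linarith
  have hCS : ∑ i ∈ S, v i * (k i - 1)
      ≤ Real.sqrt (∑ i ∈ S, v i ^ 2) * Real.sqrt (∑ i ∈ S, (k i - 1) ^ 2) :=
    Real.sum_mul_le_sqrt_mul_sqrt S v (fun i => k i - 1)
  have hv2 : Real.sqrt (∑ i ∈ S, v i ^ 2) ≤ Real.sqrt (∑ i : Fin n, v i ^ 2) := by
    apply Real.sqrt_le_sqrt
    exact Finset.sum_le_sum_of_subset_of_nonneg (Finset.subset_univ S)
      (fun i _ _ => by positivity)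
  have hk2 : Real.sqrt (∑ i ∈ S, (k i - 1) ^ 2)
      ≤ Real.sqrt (∑ i : Fin n, k i * (k i - 1)) := by
    apply Real.sqrt_le_sqrt
    calc ∑ i ∈ S, (k i - 1) ^ 2 ≤ ∑ i ∈ S, k i * (k i - 1) := by
          apply Finset.sum_le_sum
          intro i hi
          simp only [hS, Finset.mem_filter] at hi
          have h1 : (1 : ℝ) ≤ k i := by
            simp only [hk]; exact_mod_cast hi.2
          nlinarith
      _ ≤ ∑ i : Fin n, k i * (k i - 1) := by
          apply Finset.sum_le_sum_of_subset_of_nonneg (Finset.subset_univ S)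
          intro i _ hi
          simp only [hS, Finset.mem_filter, Finset.mem_univ, true_and] at hi
          push_neg at hi
          interval_cases hki : kcount h x i
          · simp [hk, hki]
  have hnn : (0 : ℝ) ≤ Real.sqrt (∑ i ∈ S, (k i - 1) ^ 2) := Real.sqrt_nonneg _
  have hnn2 : (0 : ℝ) ≤ Real.sqrt (∑ i : Fin n, v i ^ 2) := Real.sqrt_nonneg _
  calc ∑ i : Fin n, v i * k i = (∑ i : Fin n, v i * (k i - 1)) + 1 := hstep1
    _ ≤ Real.sqrt (∑ i ∈ S, v i ^ 2) * Real.sqrt (∑ i ∈ S, (k i - 1) ^ 2) + 1 := by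
        linarith [le_trans hstep2 hCS]
    _ ≤ Real.sqrt (∑ i : Fin n, v i ^ 2) * Real.sqrt (∑ i : Fin n, k i * (k i - 1)) + 1 := by
        have := mul_le_mul hv2 hk2 hnn hnn2
        linarith
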